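/- arXiv:1501.04275 — 3 statements merged into one kernel-verified Lean document; each statement's English description precedes it below -/
import Mathlib

section
/- For permutations u, v ∈ S_n, u ≤ v in the Bruhat order if and only if for all 1 ≤ j ≤ n and all 1 ≤ t ≤ n, |{r ∈ u([t]) : r < j}| ≥ |{r ∈ v([t]) : r < j}|, where u([t]) = {u(1),...,u(t)}. -/
open Finset Polynomial

/-- The inversion number (Coxeter length) of a permutation of `ℕ`, counted on `{1, …, n}`. -/
def invNum (n : ℕ) (u : Equiv.Perm ℕ) : ℕ :=
  (((Finset.Icc 1 n) ×ˢ (Finset.Icc 1 n)).filter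
    (fun p => p.1 < p.2 ∧ u p.2 < u p.1)).card

/-- `u` is a member of `S_n`: it fixes every point outside `{1, …, n}`. -/
def IsPermOn (n : ℕ) (u : Equiv.Perm ℕ) : Prop :=
  ∀ m, m ∉ Finset.Icc 1 n → u m = m

/-- The adjacent transposition `s_i`, interchanging `i` and `i + 1`. -/
def sAdj (i : ℕ) : Equiv.Perm ℕ := Equiv.swap i (i + 1)

/-- The Bruhat order on `S_n`: `u ≤ v` iff `v` is obtained from `u` by successively
multiplying on the right by transpositions, increasing the length at each step. -/
def BruhatLE (n : ℕ) (u v : Equiv.Perm ℕ) : Prop :=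
  Relation.ReflTransGen
    (fun a b => invNum n a < invNum n b ∧
      ∃ i j, 1 ≤ i ∧ i < j ∧ j ≤ n ∧ b = a * Equiv.swap i j) u v

/-- `(S_n)^J`, the minimal coset representatives, where `J = S \ {s_e : e ∈ E}`. -/
def MinReps (n : ℕ) (E : Set ℕ) (u : Equiv.Perm ℕ) : Prop :=
  ∀ j, 1 ≤ j → j ≤ n - 1 → j ∉ E → invNum n u < invNum n (sAdj j * u)

/-- `|{r ∈ u⁻¹([m]) : r < j}|`, the number of positions `r < j` of `u` holding
an element of `{1, …, m}`. -/
def posLT (n m j : ℕ) (u : Equiv.Perm ℕ) : ℕ :=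
  ((Finset.Icc 1 n).filter (fun r => r < j ∧ u r ∈ Finset.Icc 1 m)).card

/-- Deodhar's recursion with `x = q` for the parabolic `R`-polynomials of `S_n`,
for `J = S \ {s_e : e ∈ E}`. -/
def IsRFamilyQ (n : ℕ) (E : Set ℕ)
    (R : Equiv.Perm ℕ → Equiv.Perm ℕ → Polynomial ℤ) : Prop :=
  (∀ u v, MinReps n E u → MinReps n E v → ¬ BruhatLE n u v → R u v = 0) ∧
  (∀ u, MinReps n E u → R u u = 1) ∧
  (∀ u v, MinReps n E u → MinReps n E v → BruhatLE n u v → u ≠ v →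
    ∀ j, 1 ≤ j → j ≤ n - 1 → v (j + 1) < v j →
      ((u (j + 1) < u j → R u v = R (u * sAdj j) (v * sAdj j)) ∧
       (¬ u (j + 1) < u j → MinReps n E (u * sAdj j) →
          R u v = X * R (u * sAdj j) (v * sAdj j) + (X - 1) * R u (v * sAdj j)) ∧
       (¬ u (j + 1) < u j → ¬ MinReps n E (u * sAdj j) →
          R u v = - R u (v * sAdj j))))

/-!
Let `w.countLT 0 t x` count the positions `r ≤ t` with `w r < x`. If `u i < u j` with `i < j`,
passing from `u` to `u * (i j)` moves the larger value `u j` forward to position `i`, so no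
count increases; since a length-increasing transposition always has `u i < u j`, Bruhat order
implies the count inequalities. Conversely, suppose `u`'s counts dominate `v`'s and `u ≠ v`.
At the first position `i` where they differ, domination forces `u i < v i`. Let `j > i` be the
first position with `u i < u j ≤ v i` (the position of `v i` in `u` qualifies). Then
`u * (i j)` is longer than `u` and its counts still dominate `v`'s. Lengths are bounded by
`n * n`, so repeating this step reaches `v`.
-/

namespace Equiv.Perm

def countLT (w : Equiv.Perm ℕ) (a b x : ℕ) : ℕ := #{r ∈ Ioc a b | w r < x}

variable {u v w : Equiv.Perm ℕ} {a b c i j t x y : ℕ}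

lemma card_filter_image_lt_eq_countLT (w : Equiv.Perm ℕ) (t x : ℕ) :
    #{r ∈ (Icc 1 t).image w | r < x} = w.countLT 0 t x := by
  rw [countLT, filter_image, card_image_of_injective _ w.injective, ← Icc_add_one_left_eq_Ioc,
    zero_add]

lemma countLT_add (hab : a ≤ b) (hbc : b ≤ c) :
    w.countLT a c x = w.countLT a b x + w.countLT b c x := by
  simp only [countLT, card_filter, sum_Ioc_consecutive _ hab hbc]

lemma countLT_mono (hxy : x ≤ y) : w.countLT a b x ≤ w.countLT a b y :=
  card_le_card <| monotone_filter_right _ fun _ _ h => h.trans_le hxy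

lemma countLT_congr (h : ∀ r ∈ Ioc a b, u r = v r) : u.countLT a b x = v.countLT a b x := by
  unfold countLT
  congr 1
  exact filter_congr fun r hr => by rw [h r hr]

lemma countLT_add_ite_eq {p : ℕ} (hp : p ∈ Ioc a b)
    (h : ∀ r ∈ Ioc a b, r ≠ p → u r = v r) :
    u.countLT a b x + (if v p < x then 1 else 0) =
      v.countLT a b x + (if u p < x then 1 else 0) := by
  simp only [countLT, card_filter, ← add_sum_erase _ _ hp]
  rw [sum_congr rfl fun r hr => by rw [h r (mem_of_mem_erase hr) (ne_of_mem_erase hr)]]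
  omega

lemma countLT_mul_swap_of_lt (hij : i < j) (ht : t < i) :
    (u * swap i j).countLT 0 t x = u.countLT 0 t x :=
  countLT_congr fun r hr => by
    rw [mem_Ioc] at hr
    rw [mul_apply, swap_apply_of_ne_of_ne (by omega) (by omega)]

lemma countLT_mul_swap_of_le (hi : 0 < i) (hij : i < j) (ht : j ≤ t) :
    (u * swap i j).countLT 0 t x = u.countLT 0 t x := by
  rw [countLT, countLT, card_filter, card_filter]
  refine (swap i j).sum_comp _ (fun r => if u r < x then 1 else 0) fun r hr => ?_
  rw [coe_Ioc, Set.mem_Ioc]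
  by_cases hri : r = i; · omega
  by_cases hrj : r = j; · omega
  exact absurd (swap_apply_of_ne_of_ne hri hrj) hr

lemma countLT_mul_swap_add_ite (hi : 0 < i) (hit : i ≤ t) (htj : t < j) :
    (u * swap i j).countLT 0 t x + (if u i < x then 1 else 0) =
      u.countLT 0 t x + (if u j < x then 1 else 0) := by
  have h := countLT_add_ite_eq (u := u * swap i j) (v := u) (x := x) (p := i)
    (mem_Ioc.2 ⟨hi, hit⟩) fun r hr hri => by
      rw [mem_Ioc] at hr
      rw [mul_apply, swap_apply_of_ne_of_ne hri (by omega)]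
  simpa using h

lemma countLT_mul_swap_le (hi : 0 < i) (hij : i < j) (hu : u i < u j) (t x : ℕ) :
    (u * swap i j).countLT 0 t x ≤ u.countLT 0 t x := by
  rcases lt_or_ge t i with ht | hit
  · exact (countLT_mul_swap_of_lt hij ht).le
  rcases le_or_gt j t with hjt | htj
  · exact (countLT_mul_swap_of_le hi hij hjt).le
  have := countLT_mul_swap_add_ite (u := u) (x := x) hi hit htj
  split_ifs at this <;> omega

end Equiv.Perm

lemma Equiv.swap_apply_mem_iff {α : Type*} [DecidableEq α] {s : Finset α} {i j : α}
    (hi : i ∈ s) (hj : j ∈ s) (r : α) : swap i j r ∈ s ↔ r ∈ s := by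
  rw [swap_apply_def]
  split_ifs <;> simp_all

section

open Equiv

variable {u : Perm ℕ} {i j k n : ℕ}

lemma invNum_le (n : ℕ) (u : Perm ℕ) : invNum n u ≤ n * n :=
  (card_filter_le _ _).trans_eq (by simp)

lemma invNum_mul_swap_eq (hi : i ∈ Icc 1 n) (hj : j ∈ Icc 1 n) :
    invNum n (u * swap i j) =
      #{p ∈ Icc 1 n ×ˢ Icc 1 n | swap i j p.1 < swap i j p.2 ∧ u p.2 < u p.1} := by
  refine card_equiv ((swap i j).prodCongr (swap i j)) fun p => ?_
  simp only [mem_filter]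
  simp [swap_apply_mem_iff hi hj]

lemma invNum_mul_swap_succ_of_lt (hk : 1 ≤ k) (hkn : k + 1 ≤ n) (h : u k < u (k + 1)) :
    invNum n (u * swap k (k + 1)) = invNum n u + 1 := by
  rw [invNum_mul_swap_eq (mem_Icc.2 ⟨hk, by omega⟩) (mem_Icc.2 ⟨by omega, hkn⟩), invNum,
    ← card_insert_of_notMem (a := (k + 1, k))]
  · congr 1
    ext ⟨a, b⟩
    simp only [mem_filter, mem_product, mem_insert, Prod.mk.injEq]
    rw [swap_apply_def, swap_apply_def]
    split_ifs <;> subst_vars <;> simp_all <;> omega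
  · simp

lemma invNum_mul_swap_succ_of_gt (hk : 1 ≤ k) (hkn : k + 1 ≤ n) (h : u (k + 1) < u k) :
    invNum n (u * swap k (k + 1)) + 1 = invNum n u := by
  have := invNum_mul_swap_succ_of_lt (u := u * swap k (k + 1)) hk hkn (by simpa using h)
  rwa [mul_assoc, swap_mul_self, mul_one, eq_comm] at this

lemma invNum_lt_invNum_mul_swap (hi : 1 ≤ i) (hij : i < j) (hjn : j ≤ n) (h : u i < u j) :
    invNum n u < invNum n (u * swap i j) := by
  obtain ⟨d, hd⟩ : ∃ d, j = i + 1 + d := ⟨j - (i + 1), by omega⟩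
  induction d generalizing i u with
  | zero =>
    subst hd
    rw [invNum_mul_swap_succ_of_lt hi hjn h]
    omega
  | succ d ih =>
    -- `(i j) = sᵢ (i+1 j) sᵢ`, and multiplying by `sᵢ` changes the length by exactly one.
    set z := u * swap i (i + 1) * swap (i + 1) j
    have hz : u * swap i j = z * swap i (i + 1) := by
      ext r
      simp only [z, Perm.mul_apply, swap_apply_def]
      congr 1
      split_ifs <;> omega
    have hzi : z i = u (i + 1) := by
      simp only [z, Perm.mul_apply]
      rw [swap_apply_of_ne_of_ne (show i ≠ i + 1 by omega) (show i ≠ j by omega),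
        swap_apply_left]
    have hzi' : z (i + 1) = u j := by
      simp only [z, Perm.mul_apply]
      rw [swap_apply_left, swap_apply_of_ne_of_ne (show j ≠ i by omega) (by omega)]
    have hlt : invNum n (u * swap i (i + 1)) < invNum n z := by
      refine ih (by omega) (by omega) ?_ (by omega)
      simp only [Perm.mul_apply]
      rwa [swap_apply_right, swap_apply_of_ne_of_ne (show j ≠ i by omega) (by omega)]
    rw [hz]
    rcases lt_or_gt_of_ne (u.injective.ne (show i ≠ i + 1 by omega)) with h₁ | h₁
    · have hus := invNum_mul_swap_succ_of_lt (n := n) hi (by omega) h₁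
      rcases lt_or_gt_of_ne (u.injective.ne (show i + 1 ≠ j by omega)) with h₂ | h₂
      · have hzs := invNum_mul_swap_succ_of_lt (u := z) (n := n) hi (by omega)
          (by rwa [hzi, hzi'])
        omega
      · have hzs := invNum_mul_swap_succ_of_gt (u := z) (n := n) hi (by omega)
          (by rwa [hzi, hzi'])
        omega
    · have hus := invNum_mul_swap_succ_of_gt (n := n) hi (by omega) h₁
      have hzs := invNum_mul_swap_succ_of_lt (u := z) (n := n) hi (by omega)
        (by rw [hzi, hzi']; omega)
      omega

lemma lt_of_invNum_lt_invNum_mul_swap (hi : 1 ≤ i) (hij : i < j) (hjn : j ≤ n)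
    (h : invNum n u < invNum n (u * swap i j)) : u i < u j := by
  refine (lt_or_gt_of_ne (u.injective.ne hij.ne)).resolve_right fun hji => ?_
  have := invNum_lt_invNum_mul_swap (u := u * swap i j) hi hij hjn (by simpa using hji)
  rw [mul_assoc, swap_mul_self, mul_one] at this
  omega

end

namespace IsPermOn

variable {u : Equiv.Perm ℕ} {i j r t x n : ℕ}

lemma apply_mem (hu : IsPermOn n u) (hr : r ∈ Icc 1 n) : u r ∈ Icc 1 n := by
  by_contra h
  rw [u.injective (hu _ h)] at h
  exact h hr

lemma mul_swap (hu : IsPermOn n u) (hi : i ∈ Icc 1 n) (hj : j ∈ Icc 1 n) :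
    IsPermOn n (u * Equiv.swap i j) := fun m hm => by
  rw [Equiv.Perm.mul_apply, Equiv.swap_apply_of_ne_of_ne (by rintro rfl; exact hm hi)
    (by rintro rfl; exact hm hj), hu m hm]

lemma countLT_eq (hu : IsPermOn n u) (ht : t ≤ n) (hx : n < x) : u.countLT 0 t x = t := by
  rw [Equiv.Perm.countLT, filter_true_of_mem fun r hr => ?_, Nat.card_Ioc, Nat.sub_zero]
  rw [mem_Ioc] at hr
  have := hu.apply_mem (mem_Icc.2 ⟨hr.1, hr.2.trans ht⟩)
  rw [mem_Icc] at this
  omega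

end IsPermOn

lemma BruhatLE.countLT_le {n : ℕ} {u v : Equiv.Perm ℕ} (h : BruhatLE n u v) (t x : ℕ) :
    v.countLT 0 t x ≤ u.countLT 0 t x := by
  induction h with
  | refl => exact le_rfl
  | tail _ hstep ih =>
    obtain ⟨hlen, i, j, hi, hij, hjn, rfl⟩ := hstep
    exact (Equiv.Perm.countLT_mul_swap_le hi hij
      (lt_of_invNum_lt_invNum_mul_swap hi hij hjn hlen) t x).trans ih

def CountDominates (n : ℕ) (u v : Equiv.Perm ℕ) : Prop :=
  ∀ t ≤ n, ∀ x, v.countLT 0 t x ≤ u.countLT 0 t x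

namespace CountDominates

open Equiv Equiv.Perm

variable {u v : Perm ℕ} {i j n : ℕ}

lemma of_forall (hu : IsPermOn n u) (hv : IsPermOn n v)
    (h : ∀ x, 1 ≤ x → x ≤ n → ∀ t, 1 ≤ t → t ≤ n → v.countLT 0 t x ≤ u.countLT 0 t x) :
    CountDominates n u v := by
  intro t ht x
  rcases Nat.eq_zero_or_pos t with rfl | ht₀
  · simp [countLT]
  rcases Nat.eq_zero_or_pos x with rfl | hx₀
  · simp [countLT]
  rcases le_or_gt x n with hxn | hxn
  · exact h x hx₀ hxn t ht₀ ht
  · rw [hu.countLT_eq ht hxn, hv.countLT_eq ht hxn]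

lemma mul_swap (hdom : CountDominates n u v) (hi : 0 < i) (hij : i < j)
    (hagree : ∀ r < i, u r = v r) (hjv : u j ≤ v i)
    (hgap : ∀ k, i < k → k < j → u i < u k → v i < u k) :
    CountDominates n (u * swap i j) v := by
  intro t ht x
  rcases lt_or_ge t i with hti | hit
  · rw [countLT_mul_swap_of_lt hij hti]; exact hdom t ht x
  rcases le_or_gt j t with hjt | htj
  · rw [countLT_mul_swap_of_le hi hij hjt]; exact hdom t ht x
  have hswap := countLT_mul_swap_add_ite (u := u) (x := x) hi hit htj
  by_cases hx : x ≤ u i ∨ u j < x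
  · have := hdom t ht x
    split_ifs at hswap <;> omega
  -- Here the count drops by one, and positions in `(i, t]` hold no value in `(u i, v i]`, so
  -- comparing the counts below `x` and below `v i + 1` leaves room for that drop.
  have hprefix : ∀ z, u.countLT 0 i z + (if v i < z then 1 else 0) =
      v.countLT 0 i z + (if u i < z then 1 else 0) := fun z =>
    countLT_add_ite_eq (mem_Ioc.2 ⟨hi, le_rfl⟩) fun r hr hri => hagree r (by
      rw [mem_Ioc] at hr; omega)
  have htail_u : u.countLT i t x = u.countLT i t (v i + 1) := by
    unfold countLT
    congr 1
    refine filter_congr fun k hk => ?_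
    rw [mem_Ioc] at hk
    have := hgap k hk.1 (by omega)
    omega
  have htail_v : v.countLT i t x ≤ v.countLT i t (v i + 1) := countLT_mono (by omega)
  have hdom_top := hdom t ht (v i + 1)
  have hpx := hprefix x
  have hpy := hprefix (v i + 1)
  rw [countLT_add (w := v) (Nat.zero_le i) hit] at hdom_top ⊢
  rw [countLT_add (w := u) (Nat.zero_le i) hit] at hswap hdom_top
  split_ifs at hswap hpx hpy <;> omega

lemma exists_swap (hu : IsPermOn n u) (hv : IsPermOn n v) (hdom : CountDominates n u v)
    (hne : u ≠ v) :
    ∃ i j, 1 ≤ i ∧ i < j ∧ j ≤ n ∧ u i < u j ∧ CountDominates n (u * swap i j) v := by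
  have hdiff : ∃ i, u i ≠ v i := by
    by_contra! h
    exact hne (Equiv.ext h)
  obtain ⟨i, hi, hagree⟩ : ∃ i, u i ≠ v i ∧ ∀ r < i, u r = v r :=
    ⟨Nat.find hdiff, Nat.find_spec hdiff, fun r hr => not_not.1 (Nat.find_min hdiff hr)⟩
  have hiI : i ∈ Icc 1 n := by
    by_contra h
    exact hi ((hu i h).trans (hv i h).symm)
  have hvi := hv.apply_mem hiI
  rw [mem_Icc] at hiI hvi
  have hprefix := countLT_add_ite_eq (u := u) (v := v) (x := u i) (mem_Ioc.2 ⟨hiI.1, le_rfl⟩)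
    fun r hr hri => hagree r (by rw [mem_Ioc] at hr; omega)
  have hlt : u i < v i := by
    have := hdom i hiI.2 (u i)
    split_ifs at hprefix <;> omega
  have hval : ∃ k, i < k ∧ u i < u k ∧ u k ≤ v i := by
    refine ⟨u.symm (v i), ?_, by simpa using hlt, by simp⟩
    by_contra! hle
    rcases hle.lt_or_eq with hlt' | heq
    · have := hagree _ hlt'
      rw [apply_symm_apply] at this
      have := v.injective this
      omega
    · have := congrArg u heq
      rw [apply_symm_apply] at this
      exact hi this.symm
  obtain ⟨j, ⟨hij, huj, hjv⟩, hgap⟩ : ∃ j, (i < j ∧ u i < u j ∧ u j ≤ v i) ∧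
      ∀ k, i < k → k < j → u i < u k → v i < u k :=
    ⟨Nat.find hval, Nat.find_spec hval, fun k hik hkj huk => by
      by_contra! h
      exact Nat.find_min hval hkj ⟨hik, huk, h⟩⟩
  have hjn : j ≤ n := by
    by_contra hjn
    have := hu j (by rw [mem_Icc]; omega)
    omega
  exact ⟨i, j, hiI.1, hij, hjn, huj, hdom.mul_swap hiI.1 hij hagree hjv hgap⟩

end CountDominates

open Equiv in
lemma bruhatLE_of_countDominates {n : ℕ} {u v : Perm ℕ} (hu : IsPermOn n u) (hv : IsPermOn n v)
    (hdom : CountDominates n u v) : BruhatLE n u v := by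
  induction h : n * n - invNum n u using Nat.strong_induction_on generalizing u with
  | _ d ih =>
  by_cases huv : u = v
  · exact huv ▸ .refl
  obtain ⟨i, j, hi, hij, hjn, hlt, hdom'⟩ := hdom.exists_swap hu hv huv
  have hlen := invNum_lt_invNum_mul_swap hi hij hjn hlt
  refine .head ⟨hlen, i, j, hi, hij, hjn, rfl⟩ (ih _ ?_ (hu.mul_swap ?_ ?_) hdom' rfl)
  · have := invNum_le n (u * swap i j)
    omega
  · exact mem_Icc.2 ⟨hi, by omega⟩
  · exact mem_Icc.2 ⟨by omega, hjn⟩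

/-- Bruhat order via the counting criterion over all `t`. -/
theorem bruhat_iff_counts (n : ℕ) (u v : Equiv.Perm ℕ)
    (hu : IsPermOn n u) (hv : IsPermOn n v) :
    BruhatLE n u v ↔
      ∀ j, 1 ≤ j → j ≤ n → ∀ t, 1 ≤ t → t ≤ n →
        (((Finset.Icc 1 t).image v).filter (fun r => r < j)).card ≤
        (((Finset.Icc 1 t).image u).filter (fun r => r < j)).card := by
  simp only [Equiv.Perm.card_filter_image_lt_eq_countLT]
  exact ⟨fun h x _ _ t _ _ => h.countLT_le t x,
    fun h => bruhatLE_of_countDominates hu hv (.of_forall hu hv h)⟩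
end

section
/- Let (W,S) be a Coxeter system, J ⊆ S, and u, v ∈ W^J with u ≤ v in the Bruhat order. Then the parabolic R-polynomials for x = q and x = -1 satisfy q^{ℓ(v)−ℓ(u)} R^{J,q}_{u,v}(1/q) = (−1)^{ℓ(v)−ℓ(u)} R^{J,−1}_{u,v}(q). -/
open Polynomial

variable {B W : Type*} [Group W] {M : CoxeterMatrix B}

/-- The Bruhat order on a Coxeter group: `u ≤ v` iff `v` is obtained from `u` by
successively right-multiplying by reflections, increasing the length at each step. -/
def CoxBruhatLE (cs : CoxeterSystem M W) (u v : W) : Prop :=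
  Relation.ReflTransGen
    (fun a b => cs.length a < cs.length b ∧ ∃ t, cs.IsReflection t ∧ b = a * t) u v

/-- `W^J`, the minimal coset representatives for `W / W_J`. -/
def CoxMinReps (cs : CoxeterSystem M W) (J : Set B) (w : W) : Prop :=
  ∀ i ∈ J, cs.length w < cs.length (cs.simple i * w)

/-- Deodhar's defining recursion for a family of parabolic `R`-polynomials with
parameter `x`. -/
def IsParabolicRFamily (cs : CoxeterSystem M W) (J : Set B) (x : Polynomial ℤ)
    (R : W → W → Polynomial ℤ) : Prop :=
  (∀ u v, CoxMinReps cs J u → CoxMinReps cs J v → ¬ CoxBruhatLE cs u v →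
    R u v = 0) ∧
  (∀ u, CoxMinReps cs J u → R u u = 1) ∧
  (∀ u v, CoxMinReps cs J u → CoxMinReps cs J v → CoxBruhatLE cs u v → u ≠ v →
    ∀ i : B, cs.length (v * cs.simple i) < cs.length v →
      ((cs.length (u * cs.simple i) < cs.length u →
          R u v = R (u * cs.simple i) (v * cs.simple i)) ∧
       (¬ cs.length (u * cs.simple i) < cs.length u →
          CoxMinReps cs J (u * cs.simple i) →
          R u v = X * R (u * cs.simple i) (v * cs.simple i) +
            (X - 1) * R u (v * cs.simple i)) ∧
       (¬ cs.length (u * cs.simple i) < cs.length u →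
          ¬ CoxMinReps cs J (u * cs.simple i) →
          R u v = (X - 1 - x) * R u (v * cs.simple i))))

/-- Bruhat comparable elements have comparable lengths. -/
lemma coxBruhatLE_eq_or_length_lt (cs : CoxeterSystem M W) {u v : W}
    (huv : CoxBruhatLE cs u v) : u = v ∨ cs.length u < cs.length v := by
  induction huv with
  | refl => exact Or.inl rfl
  | tail h1 h2 ih =>
    right
    rcases ih with rfl | h
    · exact h2.1
    · exact h.trans h2.1

/-- A minimal coset representative stays minimal after a right descent. -/
lemma coxMinReps_mul_simple (cs : CoxeterSystem M W) {J : Set B} {w : W}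
    (hw : CoxMinReps cs J w) {i : B}
    (hi : cs.length (w * cs.simple i) < cs.length w) :
    CoxMinReps cs J (w * cs.simple i) := by
  intro j hj
  have h1 := hw j hj
  have h2 : cs.length (w * cs.simple i) + 1 = cs.length w :=
    (cs.isRightDescent_iff).mp hi
  have h3 := cs.length_mul_simple (cs.simple j * w) i
  rw [mul_assoc] at h3
  omega

private lemma neg_one_zpow_sub_two (d : ℤ) : ((-1 : ℚ)) ^ (d - 2) = (-1 : ℚ) ^ d := by
  have h : ((-1 : ℚ)) ^ (d - 2 + 2) = ((-1 : ℚ)) ^ (d - 2) * ((-1 : ℚ)) ^ (2 : ℤ) :=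
    zpow_add₀ (by norm_num) _ _
  have h2 : ((-1 : ℚ)) ^ (2 : ℤ) = 1 := by norm_num
  rw [h2, mul_one] at h
  rw [← h]
  norm_num

private lemma neg_one_zpow_sub_one (d : ℤ) : ((-1 : ℚ)) ^ (d - 1) = -((-1 : ℚ) ^ d) := by
  have h : ((-1 : ℚ)) ^ (d - 1 + 1) = ((-1 : ℚ)) ^ (d - 1) * ((-1 : ℚ)) ^ (1 : ℤ) :=
    zpow_add₀ (by norm_num) _ _
  rw [zpow_one] at h
  have h3 : ((-1 : ℚ)) ^ (d - 1 + 1) = (-1 : ℚ) ^ d := by norm_num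
  rw [h3] at h
  linarith

private lemma zpow_split_two {t : ℚ} (ht : t ≠ 0) (d : ℤ) :
    t ^ d = t ^ (d - 2) * t * t := by
  have h : t ^ (d - 2 + 2) = t ^ (d - 2) * t ^ (2 : ℤ) := zpow_add₀ ht _ _
  have h2 : t ^ (2 : ℤ) = t * t := by
    rw [show (2 : ℤ) = 1 + 1 by norm_num, zpow_add₀ ht, zpow_one]
  rw [h2] at h
  rw [show d - 2 + 2 = d by ring] at h
  rw [h, mul_assoc]

private lemma zpow_split_one {t : ℚ} (ht : t ≠ 0) (d : ℤ) :
    t ^ d = t ^ (d - 1) * t := by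
  have h : t ^ (d - 1 + 1) = t ^ (d - 1) * t ^ (1 : ℤ) := zpow_add₀ ht _ _
  rw [zpow_one] at h
  rw [show d - 1 + 1 = d by ring] at h
  exact h

/-- The key algebraic computation for the "ascent into `W^J`" case. -/
private lemma alg_case2 {t : ℚ} (ht : t ≠ 0) (d : ℤ) (a b a' b' : ℚ)
    (h1 : t ^ (d - 2) * a = (-1 : ℚ) ^ (d - 2) * a')
    (h2 : t ^ (d - 1) * b = (-1 : ℚ) ^ (d - 1) * b') :
    t ^ d * (t⁻¹ * a + (t⁻¹ - 1) * b) = (-1 : ℚ) ^ d * (t * a' + (t - 1) * b') := by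
  rw [neg_one_zpow_sub_two] at h1
  rw [neg_one_zpow_sub_one] at h2
  have e2 := zpow_split_two ht d
  have e3 : t ^ (d - 1) = t ^ (d - 2) * t := by
    have h := zpow_add₀ ht (d - 2) 1
    rw [zpow_one] at h
    rw [show d - 1 = d - 2 + 1 by ring, h]
  have hinv : t * t⁻¹ = 1 := mul_inv_cancel₀ ht
  rw [e3] at h2
  rw [e2]
  linear_combination t * h1 + (1 - t) * h2 +
    (t ^ (d - 2) * t * a + t ^ (d - 2) * t * b) * hinv

/-- The key algebraic computation for the "ascent out of `W^J`" case. -/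
private lemma alg_case3 {t : ℚ} (ht : t ≠ 0) (d : ℤ) (b b' : ℚ)
    (h2 : t ^ (d - 1) * b = (-1 : ℚ) ^ (d - 1) * b') :
    t ^ d * (-b) = (-1 : ℚ) ^ d * (t * b') := by
  rw [neg_one_zpow_sub_one] at h2
  rw [zpow_split_one ht d]
  linear_combination (-t) * h2

/-- The main induction for Deodhar's relation, over the length of `v`. -/
private lemma deodhar_aux (cs : CoxeterSystem M W) (J : Set B)
    (Rq Rm : W → W → Polynomial ℤ)
    (hq : IsParabolicRFamily cs J X Rq) (hm : IsParabolicRFamily cs J (-1) Rm) :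
    ∀ n : ℕ, ∀ v : W, cs.length v = n → CoxMinReps cs J v →
      ∀ u : W, CoxMinReps cs J u → ∀ t : ℚ, t ≠ 0 →
      t ^ ((cs.length v : ℤ) - cs.length u) *
        (Rq u v).eval₂ (Int.castRingHom ℚ) t⁻¹ =
      (-1 : ℚ) ^ ((cs.length v : ℤ) - cs.length u) *
        (Rm u v).eval₂ (Int.castRingHom ℚ) t := by
  intro n
  induction n using Nat.strong_induction_on with
  | _ n ih =>
  intro v hvn hv u hu t ht
  by_cases hle : CoxBruhatLE cs u v
  · by_cases heq : u = v
    · subst heq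
      rw [hq.2.1 u hu, hm.2.1 u hu]
      simp
    · -- u < v strictly, so v ≠ 1 and v has a right descent
      have hlt : cs.length u < cs.length v :=
        (coxBruhatLE_eq_or_length_lt cs hle).resolve_left heq
      have hv1 : v ≠ 1 := by
        intro h
        rw [h, cs.length_one] at hlt
        omega
      obtain ⟨i, hi⟩ := cs.exists_rightDescent_of_ne_one hv1
      have hi' : cs.length (v * cs.simple i) < cs.length v := hi
      have hvs : cs.length (v * cs.simple i) + 1 = cs.length v :=
        (cs.isRightDescent_iff).mp hi
      have hvsmem : CoxMinReps cs J (v * cs.simple i) :=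
        coxMinReps_mul_simple cs hv hi'
      obtain ⟨hq1, hq2, hq3⟩ := hq.2.2 u v hu hv hle heq i hi'
      obtain ⟨hm1, hm2, hm3⟩ := hm.2.2 u v hu hv hle heq i hi'
      have hvs_lt : cs.length (v * cs.simple i) < n := by omega
      by_cases hus : cs.length (u * cs.simple i) < cs.length u
      · -- descent case
        have husl : cs.length (u * cs.simple i) + 1 = cs.length u :=
          (cs.isRightDescent_iff).mp hus
        have husmem : CoxMinReps cs J (u * cs.simple i) :=
          coxMinReps_mul_simple cs hu hus
        have key := ih _ hvs_lt (v * cs.simple i) rfl hvsmem (u * cs.simple i) husmem t ht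
        rw [hq1 hus, hm1 hus]
        have hd : ((cs.length (v * cs.simple i) : ℤ) - cs.length (u * cs.simple i))
            = ((cs.length v : ℤ) - cs.length u) := by
          push_cast [← hvs, ← husl]
          ring
        rwa [hd] at key
      · -- ascent case
        have husl : cs.length (u * cs.simple i) = cs.length u + 1 :=
          (cs.not_isRightDescent_iff).mp hus
        set d : ℤ := (cs.length v : ℤ) - cs.length u with hd_def
        have key2 := ih _ hvs_lt (v * cs.simple i) rfl hvsmem u hu t ht
        have hd1 : ((cs.length (v * cs.simple i) : ℤ) - cs.length u) = d - 1 := by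
          rw [hd_def]
          push_cast [← hvs]
          ring
        rw [hd1] at key2
        by_cases husm : CoxMinReps cs J (u * cs.simple i)
        · -- ascent, us ∈ W^J
          have key1 := ih _ hvs_lt (v * cs.simple i) rfl hvsmem (u * cs.simple i) husm t ht
          have hd2 : ((cs.length (v * cs.simple i) : ℤ) - cs.length (u * cs.simple i))
              = d - 2 := by
            rw [hd_def]
            push_cast [← hvs, husl]
            ring
          rw [hd2] at key1
          rw [hq2 hus husm, hm2 hus husm]
          simp only [eval₂_add, eval₂_mul, eval₂_sub, eval₂_X, eval₂_one]
          exact alg_case2 ht d _ _ _ _ key1 key2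
        · -- ascent, us ∉ W^J
          rw [hq3 hus husm, hm3 hus husm]
          simp only [eval₂_mul, eval₂_sub, eval₂_X, eval₂_one, eval₂_neg, eval₂_one]
          have hXq : (t⁻¹ - 1 - t⁻¹) * (Rq u (v * cs.simple i)).eval₂ (Int.castRingHom ℚ) t⁻¹
              = -((Rq u (v * cs.simple i)).eval₂ (Int.castRingHom ℚ) t⁻¹) := by ring
          have hXm : (t - 1 - (-1)) * (Rm u (v * cs.simple i)).eval₂ (Int.castRingHom ℚ) t
              = t * ((Rm u (v * cs.simple i)).eval₂ (Int.castRingHom ℚ) t) := by ring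
          rw [hXq, hXm]
          exact alg_case3 ht d _ _ key2
  · rw [hq.1 u v hu hv hle, hm.1 u v hu hv hle]
    simp

/-- Deodhar's relation between the parabolic `R`-polynomials for `x = q` and `x = -1`:
`q^(ℓ(v)-ℓ(u)) R^(J,q)_(u,v)(1/q) = (-1)^(ℓ(v)-ℓ(u)) R^(J,-1)_(u,v)(q)`. -/
theorem deodhar_relation (cs : CoxeterSystem M W) (J : Set B)
    (Rq Rm : W → W → Polynomial ℤ)
    (hq : IsParabolicRFamily cs J X Rq) (hm : IsParabolicRFamily cs J (-1) Rm)
    (u v : W) (hu : CoxMinReps cs J u) (hv : CoxMinReps cs J v)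
    (huv : CoxBruhatLE cs u v) :
    ∀ t : ℚ, t ≠ 0 →
      t ^ ((cs.length v : ℤ) - cs.length u) *
        (Rq u v).eval₂ (Int.castRingHom ℚ) t⁻¹ =
      (-1 : ℚ) ^ ((cs.length v : ℤ) - cs.length u) *
        (Rm u v).eval₂ (Int.castRingHom ℚ) t := by
  intro t ht
  exact deodhar_aux cs J Rq Rm hq hm (cs.length v) v rfl hv u hu t ht
end

section
/- Let J = S \ {s_i} and let u, v ∈ (S_n)^J with u ≤ v in the Bruhat order. Define D(u,v) = v^{-1}([i]) \ u^{-1}([i]) and, for 1 ≤ j ≤ n, a_j(u,v) = |{r ∈ u^{-1}([i]) : r < j}| − |{r ∈ v^{-1}([i]) : r < j}|. Then the parabolic R-polynomial satisfies R^{J,q}_{u,v}(q) = (−1)^{ℓ(v)−ℓ(u)} ∏_{j ∈ D(u,v)} (1 − q^{a_j(u,v)}). -/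
open Finset Polynomial

/-!
A minimal coset representative `w` for `J = S \ {s_i}` is exactly a permutation whose inverse
is increasing on `[1, i]` and on `[i + 1, n]`, so it is determined by its set of small positions
`w⁻¹([i])`. For two such permutations the Bruhat order becomes the Gale order of these sets,
compared through the counts `#{r ∈ w⁻¹([i]) : r < t}`. If `u ≰ v`, the position just before the
first `t` where the count of `v` exceeds that of `u` lies in `D(u, v)` with `a_j(u, v) = 0`, so
both sides of the formula vanish. Otherwise one inducts on `ℓ(v)` through Deodhar's recursion at a
descent `s_j` of `v`: right multiplication by `s_j` only exchanges the positions `j` and `j + 1`,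
so each of the three cases reduces to an identity between the factors at these two positions.
-/

open Equiv

section PermOn

variable {n : ℕ} {u v w : Perm ℕ}

lemma IsPermOn.apply_mem_Icc_iff (hw : IsPermOn n w) {r : ℕ} : w r ∈ Icc 1 n ↔ r ∈ Icc 1 n := by
  refine ⟨fun h => ?_, fun h => ?_⟩
  · by_contra hr
    exact hr (by rwa [hw r hr] at h)
  · by_contra hr
    exact hr (by rwa [w.injective (hw (w r) hr)])

lemma IsPermOn.inv (hw : IsPermOn n w) : IsPermOn n w⁻¹ :=
  fun m hm => Perm.inv_eq_iff_eq.mpr (hw m hm).symm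

lemma IsPermOn.mul (hu : IsPermOn n u) (hv : IsPermOn n v) : IsPermOn n (u * v) := by
  intro m hm
  rw [Perm.mul_apply, hv m hm, hu m hm]

lemma isPermOn_swap {x y : ℕ} (hx : x ∈ Icc 1 n) (hy : y ∈ Icc 1 n) : IsPermOn n (swap x y) :=
  fun _ hm => swap_apply_of_ne_of_ne (by rintro rfl; exact hm hx) (by rintro rfl; exact hm hy)

lemma isPermOn_sAdj {m : ℕ} (hm : 1 ≤ m) (hmn : m + 1 ≤ n) : IsPermOn n (sAdj m) :=
  isPermOn_swap (mem_Icc.mpr ⟨hm, by omega⟩) (mem_Icc.mpr ⟨by omega, hmn⟩)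

end PermOn

lemma swap_succ_lt_swap_succ_iff {m a b : ℕ} :
    swap m (m + 1) a < swap m (m + 1) b ↔
      (a < b ∧ ¬(a = m ∧ b = m + 1)) ∨ (a = m + 1 ∧ b = m) := by
  simp only [swap_apply_def]
  split_ifs <;> omega

lemma sAdj_inv (m : ℕ) : (sAdj m)⁻¹ = sAdj m := swap_inv _ _

section Inversions

variable {n : ℕ} {w : Perm ℕ}

def inversions (n : ℕ) (w : Perm ℕ) : Finset (ℕ × ℕ) :=
  ((Icc 1 n) ×ˢ (Icc 1 n)).filter (fun p => p.1 < p.2 ∧ w p.2 < w p.1)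

lemma card_inversions : #(inversions n w) = invNum n w := rfl

lemma mem_inversions {p : ℕ × ℕ} :
    p ∈ inversions n w ↔ p.1 ∈ Icc 1 n ∧ p.2 ∈ Icc 1 n ∧ p.1 < p.2 ∧ w p.2 < w p.1 := by
  simp [inversions, and_assoc]

lemma invNum_inv (hw : IsPermOn n w) : invNum n w⁻¹ = invNum n w := by
  rw [← card_inversions, ← card_inversions]
  refine card_nbij' (fun p => (w⁻¹ p.2, w⁻¹ p.1)) (fun p => (w p.2, w p.1)) ?_ ?_ ?_ ?_
  · rintro ⟨p, q⟩ h
    simp only [mem_coe, mem_inversions] at h ⊢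
    exact ⟨hw.inv.apply_mem_Icc_iff.mpr h.2.1, hw.inv.apply_mem_Icc_iff.mpr h.1, h.2.2.2,
      by simpa using h.2.2.1⟩
  · rintro ⟨p, q⟩ h
    simp only [mem_coe, mem_inversions] at h ⊢
    exact ⟨hw.apply_mem_Icc_iff.mpr h.2.1, hw.apply_mem_Icc_iff.mpr h.1, h.2.2.2,
      by simpa using h.2.2.1⟩
  · exact fun p _ => by simp
  · exact fun p _ => by simp

lemma invNum_sAdj_mul_of_lt {m : ℕ} (hw : IsPermOn n w) (hm : 1 ≤ m) (hmn : m + 1 ≤ n)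
    (h : w⁻¹ m < w⁻¹ (m + 1)) : invNum n (sAdj m * w) = invNum n w + 1 := by
  have hm₀ := hw.inv.apply_mem_Icc_iff.mpr (mem_Icc.mpr ⟨hm, by omega⟩ : m ∈ Icc 1 n)
  have hm₁ := hw.inv.apply_mem_Icc_iff.mpr (mem_Icc.mpr ⟨by omega, hmn⟩ : m + 1 ∈ Icc 1 n)
  have key : inversions n (sAdj m * w) = insert (w⁻¹ m, w⁻¹ (m + 1)) (inversions n w) := by
    ext ⟨p, q⟩
    simp only [mem_insert, mem_inversions, Prod.mk.injEq, Perm.mul_apply, sAdj,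
      swap_succ_lt_swap_succ_iff, ← Perm.eq_inv_iff_eq]
    constructor
    · rintro ⟨hp, hq, hpq, (⟨hlt, -⟩ | ⟨rfl, rfl⟩)⟩
      · exact Or.inr ⟨hp, hq, hpq, hlt⟩
      · exact Or.inl ⟨rfl, rfl⟩
    · rintro (⟨rfl, rfl⟩ | ⟨hp, hq, hpq, hlt⟩)
      · exact ⟨hm₀, hm₁, h, Or.inr ⟨rfl, rfl⟩⟩
      · exact ⟨hp, hq, hpq, Or.inl ⟨hlt, by omega⟩⟩
  rw [← card_inversions, key, card_insert_of_notMem, card_inversions]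
  simp [mem_inversions]

lemma invNum_sAdj_mul_of_gt {m : ℕ} (hw : IsPermOn n w) (hm : 1 ≤ m) (hmn : m + 1 ≤ n)
    (h : w⁻¹ (m + 1) < w⁻¹ m) : invNum n w = invNum n (sAdj m * w) + 1 := by
  have hs := invNum_sAdj_mul_of_lt ((isPermOn_sAdj hm hmn).mul hw) hm hmn
    (by simpa [mul_inv_rev, sAdj_inv, sAdj] using h)
  rwa [← mul_assoc, sAdj, swap_mul_self, one_mul] at hs

lemma invNum_mul_sAdj_of_lt {m : ℕ} (hw : IsPermOn n w) (hm : 1 ≤ m) (hmn : m + 1 ≤ n)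
    (h : w m < w (m + 1)) : invNum n (w * sAdj m) = invNum n w + 1 := by
  rw [← invNum_inv (hw.mul (isPermOn_sAdj hm hmn)), mul_inv_rev, sAdj_inv,
    invNum_sAdj_mul_of_lt hw.inv hm hmn (by simpa using h), invNum_inv hw]

lemma invNum_mul_sAdj_of_gt {m : ℕ} (hw : IsPermOn n w) (hm : 1 ≤ m) (hmn : m + 1 ≤ n)
    (h : w (m + 1) < w m) : invNum n w = invNum n (w * sAdj m) + 1 := by
  have hs := invNum_mul_sAdj_of_lt (hw.mul (isPermOn_sAdj hm hmn)) hm hmn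
    (by simpa [sAdj] using h)
  rwa [mul_assoc, sAdj, swap_mul_self, mul_one] at hs

/-- Besides `(x, y)`, the pairs whose order `swap x y` reverses are those meeting `{x, y}` in one
point, with the other point strictly between `x` and `y`. When `w x < w y`, this map sends the
inversions of `w` injectively to those of `w * swap x y` other than `(x, y)`. -/
def transportPair (x y : ℕ) (p : ℕ × ℕ) : ℕ × ℕ :=
  if swap x y p.1 < swap x y p.2 then (swap x y p.1, swap x y p.2) else p

lemma transportPair_injOn (x y : ℕ) : Set.InjOn (transportPair x y) {p | p.1 < p.2} := by
  rintro ⟨a, b⟩ hab ⟨a', b'⟩ hab' heq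
  simp only [Set.mem_ofPred_eq] at hab hab'
  simp only [transportPair] at heq
  split_ifs at heq with h₁ h₂ h₂ <;> simp only [Prod.mk.injEq] at heq ⊢
  · exact ⟨(swap x y).injective heq.1, (swap x y).injective heq.2⟩
  · rw [← heq.1, ← heq.2, swap_apply_self, swap_apply_self] at h₂
    exact absurd hab h₂
  · rw [heq.1, heq.2, swap_apply_self, swap_apply_self] at h₁
    exact absurd hab' h₁
  · exact heq

lemma transportPair_mem_erase_inversions {x y : ℕ} (hx : 1 ≤ x) (hxy : x < y) (hy : y ≤ n)
    (h : w x < w y) {p : ℕ × ℕ} (hp : p ∈ inversions n w) :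
    transportPair x y p ∈ (inversions n (w * swap x y)).erase (x, y) := by
  have hτ : ∀ r, swap x y r ∈ Icc 1 n ↔ r ∈ Icc 1 n := fun r =>
    (isPermOn_swap (mem_Icc.mpr ⟨hx, by omega⟩) (mem_Icc.mpr ⟨by omega, hy⟩)).apply_mem_Icc_iff
  obtain ⟨a, b⟩ := p
  obtain ⟨ha, hb, hlt, hinv⟩ := mem_inversions.mp hp
  dsimp only at ha hb hlt hinv
  simp only [transportPair, mem_erase, mem_inversions, Perm.mul_apply]
  split_ifs with hord
  · simp only [swap_apply_self, hτ, Ne, Prod.mk.injEq, swap_apply_eq_iff, swap_apply_left,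
      swap_apply_right]
    exact ⟨by omega, ha, hb, hord, hinv⟩
  · have hne : ¬(a = x ∧ b = y) := by
      rintro ⟨rfl, rfl⟩
      exact absurd h (not_lt.mpr hinv.le)
    have hcases : (a = x ∧ b < y) ∨ (x < a ∧ b = y) := by
      simp only [swap_apply_def] at hord
      split_ifs at hord <;> omega
    refine ⟨by simpa using hne, ha, hb, hlt, ?_⟩
    dsimp only
    rcases hcases with ⟨rfl, hby⟩ | ⟨hxa, rfl⟩
    · rw [swap_apply_left, swap_apply_of_ne_of_ne (by omega) (by omega)]
      omega
    · rw [swap_apply_right, swap_apply_of_ne_of_ne (by omega) (by omega)]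
      omega

lemma invNum_lt_invNum_mul_swap_s10 {x y : ℕ} (hx : 1 ≤ x) (hxy : x < y) (hy : y ≤ n)
    (h : w x < w y) : invNum n w < invNum n (w * swap x y) := by
  have hxy_mem : (x, y) ∈ inversions n (w * swap x y) := by
    simp only [mem_inversions, Perm.mul_apply, swap_apply_left, swap_apply_right]
    exact ⟨mem_Icc.mpr ⟨hx, by omega⟩, mem_Icc.mpr ⟨by omega, hy⟩, hxy, h⟩
  calc invNum n w ≤ #((inversions n (w * swap x y)).erase (x, y)) :=
        card_le_card_of_injOn _ (fun p => transportPair_mem_erase_inversions hx hxy hy h)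
          ((transportPair_injOn x y).mono fun p hp => (mem_inversions.mp hp).2.2.1)
    _ < invNum n (w * swap x y) := card_erase_lt_of_mem hxy_mem

lemma lt_of_invNum_lt_invNum_mul_swap_s10 {x y : ℕ} (hx : 1 ≤ x) (hxy : x < y) (hy : y ≤ n)
    (h : invNum n w < invNum n (w * swap x y)) : w x < w y := by
  rcases lt_trichotomy (w x) (w y) with hlt | heq | hgt
  · exact hlt
  · exact absurd (w.injective heq) hxy.ne
  · have := invNum_lt_invNum_mul_swap_s10 (w := w * swap x y) hx hxy hy (by simpa using hgt)
    rw [mul_assoc, swap_mul_self, mul_one] at this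
    omega

lemma exists_descent_of_invNum_pos (h : 0 < invNum n w) :
    ∃ j, 1 ≤ j ∧ j + 1 ≤ n ∧ w (j + 1) < w j := by
  rw [← card_inversions, card_pos] at h
  obtain ⟨⟨p, q⟩, hpq⟩ := h
  obtain ⟨hp, hq, hlt, hinv⟩ := mem_inversions.mp hpq
  by_contra! H
  have hmono : MonotoneOn w (Set.Icc 1 n) :=
    monotoneOn_of_le_add_one Set.ordConnected_Icc fun a _ ha ha₁ => H a ha.1 ha₁.2
  have := hmono (by simpa using hp) (by simpa using hq) hlt.le
  dsimp only at this hinv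
  omega

end Inversions

lemma StrictMonoOn.eqOn_of_image_eq {α β : Type*} [LinearOrder α] [WellFoundedLT α] [Preorder β]
    {s : Set α} {f g : α → β} (hf : StrictMonoOn f s) (hg : StrictMonoOn g s)
    (h : f '' s = g '' s) : Set.EqOn f g s := by
  rw [← Set.range_domRestrict, ← Set.range_domRestrict] at h
  have := (hf.domRestrict.range_inj hg.domRestrict).mp h
  exact fun a ha => congrFun this ⟨a, ha⟩

lemma StrictMonoOn.swap_succ_comp {α : Type*} [Preorder α] {s : Set α} {f : α → ℕ} {m : ℕ}
    (hf : StrictMonoOn f s) (h : ∀ k ∈ s, ∀ l ∈ s, ¬(f k = m ∧ f l = m + 1)) :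
    StrictMonoOn (swap m (m + 1) ∘ f) s := fun k hk l hl hkl =>
  swap_succ_lt_swap_succ_iff.mpr (Or.inl ⟨hf hk hl hkl, h k hk l hl⟩)

def IsShuffle (n i : ℕ) (σ : ℕ → ℕ) : Prop :=
  StrictMonoOn σ (Set.Icc 1 i) ∧ StrictMonoOn σ (Set.Icc (i + 1) n)

section Shuffle

variable {n i : ℕ} {u v w : Perm ℕ}

lemma minReps_singleton_iff (hi : i ≤ n) (hw : IsPermOn n w) :
    MinReps n {i} w ↔ IsShuffle n i ⇑w⁻¹ := by
  constructor
  · intro hM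
    have hasc : ∀ j, 1 ≤ j → j + 1 ≤ n → j ≠ i → w⁻¹ j < w⁻¹ (j + 1) := by
      intro j hj hjn hji
      have hlt := hM j hj (by omega) hji
      rcases lt_trichotomy (w⁻¹ j) (w⁻¹ (j + 1)) with h | h | h
      · exact h
      · exact absurd (w⁻¹.injective h) (by omega)
      · have := invNum_sAdj_mul_of_gt hw hj hjn h
        omega
    constructor <;> refine strictMonoOn_of_lt_add_one Set.ordConnected_Icc ?_ <;>
      intro a _ ha ha' <;> simp only [Set.mem_Icc] at ha ha' <;>
      exact hasc a (by omega) (by omega) (by omega)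
  · rintro ⟨hlow, hhigh⟩ j hj hjn hji
    have hji : j ≠ i := hji
    have hlt : w⁻¹ j < w⁻¹ (j + 1) := by
      rcases lt_or_gt_of_ne hji with h | h
      · exact hlow ⟨hj, h.le⟩ ⟨by omega, h⟩ (by omega)
      · exact hhigh ⟨h, by omega⟩ ⟨by omega, by omega⟩ (by omega)
    rw [invNum_sAdj_mul_of_lt hw hj (by omega) hlt]
    omega

lemma IsShuffle.le_and_lt_of_descent (hw : IsPermOn n w) (hσ : IsShuffle n i ⇑w⁻¹) {j : ℕ}
    (hj : 1 ≤ j) (hjn : j + 1 ≤ n) (hd : w (j + 1) < w j) : w (j + 1) ≤ i ∧ i < w j := by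
  have h₀ := mem_Icc.mp (hw.apply_mem_Icc_iff.mpr (mem_Icc.mpr ⟨hj, by omega⟩ : j ∈ Icc 1 n))
  have h₁ := mem_Icc.mp (hw.apply_mem_Icc_iff.mpr (mem_Icc.mpr ⟨by omega, hjn⟩ : j + 1 ∈ Icc 1 n))
  by_contra hcon
  have : w⁻¹ (w (j + 1)) < w⁻¹ (w j) := by
    rcases le_or_gt (w j) i with h | h
    · exact hσ.1 ⟨h₁.1, by omega⟩ ⟨h₀.1, h⟩ hd
    · exact hσ.2 ⟨by omega, h₁.2⟩ ⟨h, h₀.2⟩ hd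
  simp at this

lemma IsShuffle.mul_sAdj (hσ : IsShuffle n i ⇑w⁻¹) {m : ℕ} (hmix : w m ≤ i ↔ i < w (m + 1)) :
    IsShuffle n i ⇑(w * sAdj m)⁻¹ := by
  have hcoe : ⇑(w * sAdj m)⁻¹ = swap m (m + 1) ∘ ⇑w⁻¹ := by
    ext k
    simp [mul_inv_rev, sAdj]
  have hblock : ∀ k l, (k ≤ i ↔ l ≤ i) → ¬(w⁻¹ k = m ∧ w⁻¹ l = m + 1) := by
    rintro k l hkl ⟨hk, hl⟩
    rw [Perm.inv_eq_iff_eq] at hk hl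
    subst hk hl
    rw [hkl] at hmix
    omega
  rw [hcoe]
  refine ⟨hσ.1.swap_succ_comp ?_, hσ.2.swap_succ_comp ?_⟩ <;>
    intro k hk l hl <;> simp only [Set.mem_Icc] at hk hl <;> exact hblock k l (by omega)

lemma eq_of_forall_le_iff_of_isShuffle (hu : IsPermOn n u) (hv : IsPermOn n v)
    (huσ : IsShuffle n i ⇑u⁻¹) (hvσ : IsShuffle n i ⇑v⁻¹)
    (h : ∀ r ∈ Icc 1 n, u r ≤ i ↔ v r ≤ i) : u = v := by
  have hpre : ∀ r, (u r ∈ Set.Icc 1 i ↔ v r ∈ Set.Icc 1 i) ∧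
      (u r ∈ Set.Icc (i + 1) n ↔ v r ∈ Set.Icc (i + 1) n) := by
    intro r
    by_cases hr : r ∈ Icc 1 n
    · have hur := mem_Icc.mp (hu.apply_mem_Icc_iff.mpr hr)
      have hvr := mem_Icc.mp (hv.apply_mem_Icc_iff.mpr hr)
      have := h r hr
      simp only [Set.mem_Icc]
      constructor <;> constructor <;> intro <;> omega
    · rw [hu r hr, hv r hr]
      exact ⟨Iff.rfl, Iff.rfl⟩
  have hlow := huσ.1.eqOn_of_image_eq hvσ.1 (by
    ext r; simpa [Equiv.image_symm_eq_preimage] using (hpre r).1)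
  have hhigh := huσ.2.eqOn_of_image_eq hvσ.2 (by
    ext r; simpa [Equiv.image_symm_eq_preimage] using (hpre r).2)
  refine inv_injective (Equiv.ext fun r => ?_)
  by_cases hr : r ∈ Icc 1 n
  · rw [mem_Icc] at hr
    rcases le_or_gt r i with hri | hri
    · exact hlow ⟨hr.1, hri⟩
    · exact hhigh ⟨hri, hr.2⟩
  · rw [hu.inv r hr, hv.inv r hr]

end Shuffle

def countBelow (A : Finset ℕ) (t : ℕ) : ℕ := #(A.filter (· < t))

/-- The Gale order on subsets of `ℕ`: for sets of equal size, `GaleLE A B` says that the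
`k`-th smallest element of `A` is at most the `k`-th smallest element of `B`, for every `k`. -/
def GaleLE (A B : Finset ℕ) : Prop := ∀ t, countBelow B t ≤ countBelow A t

section CountBelow

variable {A B : Finset ℕ} {t x y m : ℕ}

lemma countBelow_zero : countBelow A 0 = 0 := by simp [countBelow]

lemma countBelow_succ : countBelow A (t + 1) = countBelow A t + if t ∈ A then 1 else 0 := by
  have hsplit : A.filter (· < t + 1) = A.filter (· < t) ∪ A.filter (· = t) := by
    ext r
    simp only [mem_filter, mem_union, Nat.lt_succ_iff_lt_or_eq]
    tauto
  rw [countBelow, countBelow, hsplit,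
    card_union_of_disjoint (disjoint_filter.mpr fun _ _ h h' => by omega), filter_eq']
  split_ifs <;> simp

lemma countBelow_eq_card (h : ∀ a ∈ A, a < t) : countBelow A t = #A := by
  rw [countBelow, filter_true_of_mem h]

lemma eq_of_forall_countBelow_eq (h : ∀ t, countBelow A t = countBelow B t) : A = B := by
  ext r
  have := h (r + 1)
  rw [countBelow_succ, countBelow_succ, h r] at this
  split_ifs at this with hA hB hB <;> simp_all

lemma mem_map_swap {r : ℕ} : r ∈ A.map (swap x y).toEmbedding ↔ swap x y r ∈ A := by
  simp [mem_map_equiv]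

lemma countBelow_map_swap :
    countBelow (A.map (swap x y).toEmbedding) t = #(A.filter (fun r => swap x y r < t)) := by
  rw [countBelow, filter_map, card_map]
  rfl

lemma countBelow_map_swap_le (hxy : x ≤ y) (h : y ∈ A → x ∈ A) :
    countBelow (A.map (swap x y).toEmbedding) t ≤ countBelow A t := by
  by_cases hy : y ∈ A
  · have hA : A.map (swap x y).toEmbedding = A := by
      ext r
      rw [mem_map_swap, swap_apply_def]
      split_ifs with h₁ h₂
      · simp [h₁, hy, h hy]
      · simp [h₂, hy, h hy]
      · rfl
    rw [hA]
  · rw [countBelow_map_swap]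
    refine card_le_card fun r hr => ?_
    rw [mem_filter] at hr ⊢
    refine ⟨hr.1, ?_⟩
    have hry : r ≠ y := by rintro rfl; exact hy hr.1
    have := hr.2
    rw [swap_apply_def] at this
    split_ifs at this <;> omega

lemma countBelow_map_swap_succ_of_ne (ht : t ≠ m + 1) :
    countBelow (A.map (swap m (m + 1)).toEmbedding) t = countBelow A t := by
  rw [countBelow_map_swap, countBelow]
  congr 1
  refine filter_congr fun r _ => ?_
  rw [swap_apply_def]
  split_ifs <;> omega

lemma countBelow_map_swap_succ :
    countBelow (A.map (swap m (m + 1)).toEmbedding) (m + 1) =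
      countBelow A m + if m + 1 ∈ A then 1 else 0 := by
  rw [countBelow_succ, countBelow_map_swap_succ_of_ne (by omega)]
  simp only [mem_map_swap, swap_apply_left]

lemma exists_mem_countBelow_succ_lt (h : countBelow B t < countBelow A t) :
    ∃ a ∈ A, countBelow B (a + 1) < countBelow A (a + 1) := by
  induction t with
  | zero => simp [countBelow_zero] at h
  | succ s ih =>
    by_cases hs : s ∈ A
    · exact ⟨s, hs, h⟩
    · rw [countBelow_succ, countBelow_succ (A := A), if_neg hs] at h
      exact ih (by split_ifs at h <;> omega)

lemma exists_galeLE_step (hAB : GaleLE A B) (hne : A ≠ B) :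
    ∃ m ∈ A, m + 1 ∉ A ∧ countBelow B (m + 1) < countBelow A (m + 1) := by
  obtain ⟨t, ht⟩ : ∃ t, countBelow B t < countBelow A t := by
    by_contra! H
    exact hne (eq_of_forall_countBelow_eq fun t => le_antisymm (H t) (hAB t))
  obtain ⟨a, ha, hlt⟩ := exists_mem_countBelow_succ_lt ht
  set T := A.filter (fun m => countBelow B (m + 1) < countBelow A (m + 1))
  have hT : T.Nonempty := ⟨a, mem_filter.mpr ⟨ha, hlt⟩⟩
  obtain ⟨hmA, hm⟩ := mem_filter.mp (T.max'_mem hT)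
  refine ⟨T.max' hT, hmA, fun hm₁ => ?_, hm⟩
  have hmT : T.max' hT + 1 ∈ T := by
    refine mem_filter.mpr ⟨hm₁, ?_⟩
    rw [countBelow_succ (t := T.max' hT + 1), countBelow_succ (t := T.max' hT + 1), if_pos hm₁]
    split_ifs <;> omega
  exact absurd (T.le_max' _ hmT) (by omega)

lemma GaleLE.map_swap_succ (hAB : GaleLE A B) (hm : m ∈ A) (hm₁ : m + 1 ∉ A)
    (hlt : countBelow B (m + 1) < countBelow A (m + 1)) :
    GaleLE (A.map (swap m (m + 1)).toEmbedding) B := by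
  intro t
  by_cases ht : t = m + 1
  · subst ht
    rw [countBelow_map_swap_succ, if_neg hm₁]
    rw [countBelow_succ (A := A), if_pos hm] at hlt
    omega
  · rw [countBelow_map_swap_succ_of_ne ht]
    exact hAB t

lemma sum_countBelow_map_swap_succ_lt {N : ℕ} (hm : m ∈ A) (hm₁ : m + 1 ∉ A) (hN : m + 1 < N) :
    ∑ t ∈ range N, countBelow (A.map (swap m (m + 1)).toEmbedding) t <
      ∑ t ∈ range N, countBelow A t := by
  have hdrop :
      countBelow (A.map (swap m (m + 1)).toEmbedding) (m + 1) < countBelow A (m + 1) := by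
    rw [countBelow_map_swap_succ, countBelow_succ, if_neg hm₁, if_pos hm]
    omega
  refine sum_lt_sum (fun t _ => ?_) ⟨m + 1, mem_range.mpr hN, hdrop⟩
  by_cases ht : t = m + 1
  · exact ht ▸ hdrop.le
  · exact (countBelow_map_swap_succ_of_ne ht).le

lemma exists_mem_sdiff_countBelow_eq (h : ¬GaleLE A B) :
    ∃ r ∈ B \ A, countBelow A r = countBelow B r := by
  have hex : ∃ t, countBelow A t < countBelow B t := by simpa [GaleLE] using h
  have ht := Nat.find_spec hex
  obtain ⟨r, hr⟩ : ∃ r, Nat.find hex = r + 1 :=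
    Nat.exists_eq_succ_of_ne_zero fun h0 => by simp [h0, countBelow_zero] at ht
  have hmin := Nat.find_min hex (show r < Nat.find hex by omega)
  rw [hr, countBelow_succ, countBelow_succ] at ht
  refine ⟨r, mem_sdiff.mpr ?_, ?_⟩ <;> split_ifs at ht <;> simp_all <;> omega

end CountBelow

def smallPositions (n i : ℕ) (w : Perm ℕ) : Finset ℕ := (Icc 1 n).filter (fun r => w r ∈ Icc 1 i)

section SmallPositions

variable {n i : ℕ} {u v w : Perm ℕ}

lemma posLT_eq_countBelow {t : ℕ} : posLT n i t w = countBelow (smallPositions n i w) t := by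
  simp only [posLT, countBelow, smallPositions, filter_filter, and_comm]

lemma smallPositions_subset : smallPositions n i w ⊆ Icc 1 n := filter_subset _ _

lemma IsPermOn.mem_smallPositions_iff (hw : IsPermOn n w) {r : ℕ} (hr : r ∈ Icc 1 n) :
    r ∈ smallPositions n i w ↔ w r ≤ i := by
  have := mem_Icc.mp (hw.apply_mem_Icc_iff.mpr hr)
  simp only [smallPositions, mem_filter, hr, true_and, mem_Icc]
  omega

lemma IsPermOn.card_smallPositions (hw : IsPermOn n w) (hi : i ≤ n) :
    #(smallPositions n i w) = i := by
  have : smallPositions n i w = (Icc 1 i).map (w⁻¹ : Perm ℕ).toEmbedding := by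
    ext r
    rw [mem_map_equiv, smallPositions, mem_filter, ← hw.apply_mem_Icc_iff]
    simp only [Perm.inv_def, symm_symm, mem_Icc]
    omega
  rw [this, card_map, Nat.card_Icc, Nat.add_sub_cancel]

lemma smallPositions_mul_swap {x y : ℕ} (hx : x ∈ Icc 1 n) (hy : y ∈ Icc 1 n) :
    smallPositions n i (w * swap x y) = (smallPositions n i w).map (swap x y).toEmbedding := by
  ext r
  rw [mem_map_swap, smallPositions, smallPositions, mem_filter, mem_filter, Perm.mul_apply,
    (isPermOn_swap hx hy).apply_mem_Icc_iff]

lemma BruhatLE.isPermOn (hu : IsPermOn n u) (h : BruhatLE n u v) : IsPermOn n v := by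
  induction h with
  | refl => exact hu
  | tail _ hstep ih =>
    obtain ⟨-, x, y, hx, hxy, hy, rfl⟩ := hstep
    exact ih.mul (isPermOn_swap (mem_Icc.mpr ⟨hx, by omega⟩) (mem_Icc.mpr ⟨by omega, hy⟩))

lemma BruhatLE.invNum_le (h : BruhatLE n u v) : invNum n u ≤ invNum n v := by
  induction h with
  | refl => exact le_rfl
  | tail _ hstep ih => exact ih.trans hstep.1.le

lemma BruhatLE.invNum_lt (h : BruhatLE n u v) (hne : u ≠ v) : invNum n u < invNum n v := by
  rcases h.cases_tail with rfl | ⟨w, huw, hstep⟩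
  · exact absurd rfl hne
  · exact (BruhatLE.invNum_le huw).trans_lt hstep.1

lemma BruhatLE.galeLE (hu : IsPermOn n u) (h : BruhatLE n u v) :
    GaleLE (smallPositions n i u) (smallPositions n i v) := by
  induction h with
  | refl => exact fun t => le_rfl
  | tail hab hstep ih =>
    obtain ⟨hlt, x, y, hx, hxy, hy, rfl⟩ := hstep
    have hb := BruhatLE.isPermOn hu hab
    have hxI : x ∈ Icc 1 n := mem_Icc.mpr ⟨hx, by omega⟩
    have hyI : y ∈ Icc 1 n := mem_Icc.mpr ⟨by omega, hy⟩
    have hbxy := lt_of_invNum_lt_invNum_mul_swap_s10 hx hxy hy hlt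
    intro t
    rw [smallPositions_mul_swap hxI hyI]
    refine (countBelow_map_swap_le hxy.le fun hyS => ?_).trans (ih t)
    rw [hb.mem_smallPositions_iff hyI] at hyS
    rw [hb.mem_smallPositions_iff hxI]
    omega

/-- Each step right-multiplies `u` by an `s_m` that moves a small value one position to the right
and keeps the Gale inequality (`exists_galeLE_step`); this lowers
`∑ t, countBelow (smallPositions n i u) t`. -/
lemma bruhatLE_of_galeLE (hi : i ≤ n) (hu : IsPermOn n u) (hv : IsPermOn n v)
    (huσ : IsShuffle n i ⇑u⁻¹) (hvσ : IsShuffle n i ⇑v⁻¹)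
    (h : GaleLE (smallPositions n i u) (smallPositions n i v)) : BruhatLE n u v := by
  induction hμ : ∑ t ∈ range (n + 2), countBelow (smallPositions n i u) t
    using Nat.strong_induction_on generalizing u with
  | _ N ih =>
  by_cases heq : smallPositions n i u = smallPositions n i v
  · rw [eq_of_forall_le_iff_of_isShuffle hu hv huσ hvσ fun r hr => by
      rw [← hu.mem_smallPositions_iff hr, ← hv.mem_smallPositions_iff hr, heq]]
    exact Relation.ReflTransGen.refl
  obtain ⟨m, hm, hm₁, hlt⟩ := exists_galeLE_step h heq
  have hmI : m ∈ Icc 1 n := smallPositions_subset hm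
  have hmn : m + 1 ≤ n := by
    by_contra hmn
    have hall : ∀ w : Perm ℕ, ∀ a ∈ smallPositions n i w, a < m + 1 := fun w a ha => by
      have := mem_Icc.mp (smallPositions_subset ha)
      omega
    rw [countBelow_eq_card (hall u), countBelow_eq_card (hall v), hu.card_smallPositions hi,
      hv.card_smallPositions hi] at hlt
    exact lt_irrefl _ hlt
  have hm₀ : 1 ≤ m := (mem_Icc.mp hmI).1
  have hm₁I : m + 1 ∈ Icc 1 n := mem_Icc.mpr ⟨by omega, hmn⟩
  have hum := (hu.mem_smallPositions_iff hmI).mp hm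
  have hum₁ := (hu.mem_smallPositions_iff hm₁I).not.mp hm₁
  refine Relation.ReflTransGen.head (b := u * sAdj m) ⟨?_, m, m + 1, hm₀, by omega, hmn, rfl⟩
    (ih _ ?_ (hu.mul (isPermOn_sAdj hm₀ hmn)) (huσ.mul_sAdj (by omega)) ?_ rfl)
  · rw [invNum_mul_sAdj_of_lt hu hm₀ hmn (by omega)]
    omega
  · rw [← hμ, sAdj, smallPositions_mul_swap hmI hm₁I]
    exact sum_countBelow_map_swap_succ_lt hm hm₁ (by omega)
  · rw [sAdj, smallPositions_mul_swap hmI hm₁I]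
    exact h.map_swap_succ hm hm₁ hlt

end SmallPositions

lemma prod_eq_mul_mul_prod_erase_erase {α M : Type*} [DecidableEq α] [CommMonoid M]
    {s : Finset α} {a b : α} (f : α → M) (hab : a ≠ b) (ha : a ∈ s) (hb : b ∈ s) :
    ∏ x ∈ s, f x = f a * f b * ∏ x ∈ (s.erase a).erase b, f x := by
  rw [← mul_prod_erase s f ha, ← mul_prod_erase (s.erase a) f (mem_erase.mpr ⟨hab.symm, hb⟩),
    mul_assoc]

noncomputable def brentiFactor (A B : Finset ℕ) (r : ℕ) : ℤ[X] :=
  if r ∈ B \ A then 1 - X ^ (countBelow A r - countBelow B r) else 1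

section BrentiFactor

variable {A B U : Finset ℕ} {j r : ℕ}

lemma prod_brentiFactor (hB : B ⊆ U) :
    ∏ r ∈ U, brentiFactor A B r = ∏ r ∈ B \ A, (1 - X ^ (countBelow A r - countBelow B r)) := by
  simp only [brentiFactor]
  rw [prod_ite_mem, inter_eq_right.mpr (sdiff_subset.trans hB)]

lemma prod_brentiFactor_eq_zero (hB : B ⊆ U) (h : ¬GaleLE A B) :
    ∏ r ∈ U, brentiFactor A B r = 0 := by
  obtain ⟨r, hr, heq⟩ := exists_mem_sdiff_countBelow_eq h
  exact prod_eq_zero (hB (mem_sdiff.mp hr).1) (by simp [brentiFactor, hr, heq])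

lemma brentiFactor_map_swap_succ_left (hr₀ : r ≠ j) (hr₁ : r ≠ j + 1) :
    brentiFactor (A.map (swap j (j + 1)).toEmbedding) B r = brentiFactor A B r := by
  simp only [brentiFactor, mem_sdiff, mem_map_swap, swap_apply_of_ne_of_ne hr₀ hr₁,
    countBelow_map_swap_succ_of_ne hr₁]

lemma brentiFactor_map_swap_succ_right (hr₀ : r ≠ j) (hr₁ : r ≠ j + 1) :
    brentiFactor A (B.map (swap j (j + 1)).toEmbedding) r = brentiFactor A B r := by
  simp only [brentiFactor, mem_sdiff, mem_map_swap, swap_apply_of_ne_of_ne hr₀ hr₁,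
    countBelow_map_swap_succ_of_ne hr₁]

lemma prod_brentiFactor_eq_mul_mul_prod (A' B' : Finset ℕ) (hj : j ∈ U) (hj₁ : j + 1 ∈ U)
    (h : ∀ r, r ≠ j → r ≠ j + 1 → brentiFactor A' B' r = brentiFactor A B r) :
    ∏ r ∈ U, brentiFactor A' B' r = brentiFactor A' B' j * brentiFactor A' B' (j + 1) *
      ∏ r ∈ (U.erase j).erase (j + 1), brentiFactor A B r := by
  rw [prod_eq_mul_mul_prod_erase_erase _ (by omega) hj hj₁]
  congr 1
  exact prod_congr rfl fun r hr =>
    h r (ne_of_mem_erase (mem_of_mem_erase hr)) (ne_of_mem_erase hr)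

lemma prod_brentiFactor_map_swap_succ (hj : j ∈ U) (hj₁ : j + 1 ∈ U)
    (hA : j ∉ A ∧ j + 1 ∈ A) (hB : j ∉ B ∧ j + 1 ∈ B) :
    ∏ r ∈ U, brentiFactor (A.map (swap j (j + 1)).toEmbedding)
      (B.map (swap j (j + 1)).toEmbedding) r = ∏ r ∈ U, brentiFactor A B r := by
  rw [prod_brentiFactor_eq_mul_mul_prod _ _ hj hj₁ fun r h₀ h₁ =>
      (brentiFactor_map_swap_succ_left h₀ h₁).trans (brentiFactor_map_swap_succ_right h₀ h₁),
    prod_brentiFactor_eq_mul_mul_prod _ _ hj hj₁ fun _ _ _ => rfl]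
  simp [brentiFactor, hA, hB]

lemma prod_brentiFactor_eq_of_mixed (hj : j ∈ U) (hj₁ : j + 1 ∈ U)
    (hA : j ∈ A ∧ j + 1 ∉ A) (hB : j ∉ B ∧ j + 1 ∈ B) (hle : countBelow B j ≤ countBelow A j) :
    ∏ r ∈ U, brentiFactor A B r =
      X * ∏ r ∈ U, brentiFactor (A.map (swap j (j + 1)).toEmbedding)
        (B.map (swap j (j + 1)).toEmbedding) r -
      (X - 1) * ∏ r ∈ U, brentiFactor A (B.map (swap j (j + 1)).toEmbedding) r := by
  rw [prod_brentiFactor_eq_mul_mul_prod _ _ hj hj₁ fun r h₀ h₁ =>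
      (brentiFactor_map_swap_succ_left h₀ h₁).trans (brentiFactor_map_swap_succ_right h₀ h₁),
    prod_brentiFactor_eq_mul_mul_prod _ _ hj hj₁ fun r h₀ h₁ =>
      brentiFactor_map_swap_succ_right h₀ h₁,
    prod_brentiFactor_eq_mul_mul_prod _ _ hj hj₁ fun _ _ _ => rfl]
  have hexp : countBelow A (j + 1) - countBelow B (j + 1) =
      countBelow A j - countBelow B j + 1 := by
    rw [countBelow_succ, countBelow_succ (A := B), if_pos hA.1, if_neg hB.1]
    omega
  simp only [brentiFactor, mem_sdiff, mem_map_swap, swap_apply_left, swap_apply_right, hA, hB,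
    countBelow_map_swap_succ_of_ne (show j ≠ j + 1 by omega), hexp, not_true_eq_false,
    not_false_eq_true, and_self, and_true, and_false, ↓reduceIte, one_mul, mul_one]
  ring

lemma prod_brentiFactor_map_swap_succ_right (hj : j ∈ U) (hj₁ : j + 1 ∈ U)
    (hA : j ∈ A ↔ j + 1 ∈ A) (hB : j ∉ B ∧ j + 1 ∈ B) :
    ∏ r ∈ U, brentiFactor A (B.map (swap j (j + 1)).toEmbedding) r =
      ∏ r ∈ U, brentiFactor A B r := by
  rw [prod_brentiFactor_eq_mul_mul_prod _ _ hj hj₁ fun r h₀ h₁ =>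
      brentiFactor_map_swap_succ_right h₀ h₁,
    prod_brentiFactor_eq_mul_mul_prod _ _ hj hj₁ fun _ _ _ => rfl]
  by_cases hjA : j ∈ A
  · simp [brentiFactor, hjA, hA.mp hjA, hB]
  · simp [brentiFactor, hjA, hA.not.mp hjA, hB, countBelow_succ,
      countBelow_map_swap_succ_of_ne (show j ≠ j + 1 by omega)]

end BrentiFactor

/-- The right-hand side of Brenti's formula. The sign exponent `ℓ(u) + ℓ(v)` has the parity of
`ℓ(v) - ℓ(u)` without truncated subtraction, and the factor of a position outside `D(u, v)`
is `1`. -/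
noncomputable def brentiPoly (n i : ℕ) (u v : Perm ℕ) : ℤ[X] :=
  (-1) ^ (invNum n u + invNum n v) *
    ∏ r ∈ Icc 1 n, brentiFactor (smallPositions n i u) (smallPositions n i v) r

section BrentiPoly

variable {n i j : ℕ} {u v : Perm ℕ}

lemma brentiPoly_self : brentiPoly n i u u = 1 := by
  simp [brentiPoly, brentiFactor, ← two_mul]

lemma brentiPoly_mul_sAdj_mul_sAdj (hu : IsPermOn n u) (hv : IsPermOn n v) (hj : 1 ≤ j)
    (hjn : j + 1 ≤ n) (hu_j : u (j + 1) ≤ i ∧ i < u j) (hv_j : v (j + 1) ≤ i ∧ i < v j) :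
    brentiPoly n i (u * sAdj j) (v * sAdj j) = brentiPoly n i u v := by
  have hjI : j ∈ Icc 1 n := mem_Icc.mpr ⟨hj, by omega⟩
  have hj₁I : j + 1 ∈ Icc 1 n := mem_Icc.mpr ⟨by omega, hjn⟩
  have hℓu := invNum_mul_sAdj_of_gt hu hj hjn (by omega)
  have hℓv := invNum_mul_sAdj_of_gt hv hj hjn (by omega)
  rw [brentiPoly, brentiPoly, sAdj, smallPositions_mul_swap hjI hj₁I,
    smallPositions_mul_swap hjI hj₁I, prod_brentiFactor_map_swap_succ hjI hj₁I
      (by rw [hu.mem_smallPositions_iff hjI, hu.mem_smallPositions_iff hj₁I]; omega)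
      (by rw [hv.mem_smallPositions_iff hjI, hv.mem_smallPositions_iff hj₁I]; omega)]
  rw [sAdj] at hℓu hℓv
  rw [hℓu, hℓv]
  ring

lemma brentiPoly_eq_of_mixed (hu : IsPermOn n u) (hv : IsPermOn n v) (hj : 1 ≤ j)
    (hjn : j + 1 ≤ n) (hu_j : u j ≤ i ∧ i < u (j + 1)) (hv_j : v (j + 1) ≤ i ∧ i < v j)
    (hgale : GaleLE (smallPositions n i u) (smallPositions n i v)) :
    brentiPoly n i u v =
      X * brentiPoly n i (u * sAdj j) (v * sAdj j) + (X - 1) * brentiPoly n i u (v * sAdj j) := by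
  have hjI : j ∈ Icc 1 n := mem_Icc.mpr ⟨hj, by omega⟩
  have hj₁I : j + 1 ∈ Icc 1 n := mem_Icc.mpr ⟨by omega, hjn⟩
  have hℓu := invNum_mul_sAdj_of_lt hu hj hjn (by omega)
  have hℓv := invNum_mul_sAdj_of_gt hv hj hjn (by omega)
  rw [brentiPoly, brentiPoly, brentiPoly, sAdj, smallPositions_mul_swap hjI hj₁I,
    smallPositions_mul_swap hjI hj₁I, prod_brentiFactor_eq_of_mixed hjI hj₁I
      (by rw [hu.mem_smallPositions_iff hjI, hu.mem_smallPositions_iff hj₁I]; omega)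
      (by rw [hv.mem_smallPositions_iff hjI, hv.mem_smallPositions_iff hj₁I]; omega) (hgale j)]
  rw [sAdj] at hℓu hℓv
  rw [hℓu, hℓv]
  ring

lemma brentiPoly_eq_neg (hu : IsPermOn n u) (hv : IsPermOn n v) (hj : 1 ≤ j)
    (hjn : j + 1 ≤ n) (hu_j : u j ≤ i ↔ u (j + 1) ≤ i) (hv_j : v (j + 1) ≤ i ∧ i < v j) :
    brentiPoly n i u v = -brentiPoly n i u (v * sAdj j) := by
  have hjI : j ∈ Icc 1 n := mem_Icc.mpr ⟨hj, by omega⟩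
  have hj₁I : j + 1 ∈ Icc 1 n := mem_Icc.mpr ⟨by omega, hjn⟩
  have hℓv := invNum_mul_sAdj_of_gt hv hj hjn (by omega)
  rw [brentiPoly, brentiPoly, sAdj, smallPositions_mul_swap hjI hj₁I,
    prod_brentiFactor_map_swap_succ_right hjI hj₁I
      (by rw [hu.mem_smallPositions_iff hjI, hu.mem_smallPositions_iff hj₁I, hu_j])
      (by rw [hv.mem_smallPositions_iff hjI, hv.mem_smallPositions_iff hj₁I]; omega)]
  rw [sAdj] at hℓv
  rw [hℓv]
  ring

end BrentiPoly

theorem R_eq_brentiPoly {n i : ℕ} (hi : i ≤ n) {R : Perm ℕ → Perm ℕ → ℤ[X]}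
    (hR : IsRFamilyQ n {i} R) {u v : Perm ℕ} (hu : IsPermOn n u) (hv : IsPermOn n v)
    (huσ : IsShuffle n i ⇑u⁻¹) (hvσ : IsShuffle n i ⇑v⁻¹) : R u v = brentiPoly n i u v := by
  induction hℓ : invNum n v using Nat.strong_induction_on generalizing u v with
  | _ N ih =>
  have huM := (minReps_singleton_iff hi hu).mpr huσ
  have hvM := (minReps_singleton_iff hi hv).mpr hvσ
  by_cases hB : BruhatLE n u v
  swap
  · rw [hR.1 u v huM hvM hB, brentiPoly, prod_brentiFactor_eq_zero smallPositions_subset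
      (mt (bruhatLE_of_galeLE hi hu hv huσ hvσ) hB), mul_zero]
  obtain rfl | hne := eq_or_ne u v
  · rw [hR.2.1 u huM, brentiPoly_self]
  obtain ⟨j, hj, hjn, hvj⟩ := exists_descent_of_invNum_pos (hB.invNum_lt hne).pos
  have hv_j := hvσ.le_and_lt_of_descent hv hj hjn hvj
  have ih' : ∀ {w}, IsPermOn n w → IsShuffle n i ⇑w⁻¹ →
      R w (v * sAdj j) = brentiPoly n i w (v * sAdj j) := fun hw hwσ =>
    ih _ (by have := invNum_mul_sAdj_of_gt hv hj hjn hvj; omega) hw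
      (hv.mul (isPermOn_sAdj hj hjn)) hwσ (hvσ.mul_sAdj (by omega)) rfl
  have hrec := hR.2.2 u v huM hvM hB hne j hj (by omega) hvj
  have hus := hu.mul (isPermOn_sAdj hj hjn)
  by_cases hud : u (j + 1) < u j
  · have hu_j := huσ.le_and_lt_of_descent hu hj hjn hud
    rw [hrec.1 hud, ih' hus (huσ.mul_sAdj (by omega)),
      brentiPoly_mul_sAdj_mul_sAdj hu hv hj hjn hu_j hv_j]
  by_cases husM : MinReps n {i} (u * sAdj j)
  · have husσ := (minReps_singleton_iff hi hus).mp husM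
    have hu_j := husσ.le_and_lt_of_descent hus hj hjn (by
      simp only [Perm.mul_apply, sAdj, swap_apply_left, swap_apply_right]
      exact lt_of_le_of_ne (not_lt.mp hud) (u.injective.ne (by omega)))
    simp only [Perm.mul_apply, sAdj, swap_apply_left, swap_apply_right] at hu_j
    rw [hrec.2.1 hud husM, ih' hus husσ, ih' hu huσ,
      brentiPoly_eq_of_mixed hu hv hj hjn hu_j hv_j (hB.galeLE hu)]
  · have hu_j : u j ≤ i ↔ u (j + 1) ≤ i := by
      constructor <;> intro h <;> by_contra h'
      · exact husM ((minReps_singleton_iff hi hus).mpr (huσ.mul_sAdj (by omega)))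
      · exact hud (by omega)
    rw [hrec.2.2 hud husM, ih' hu huσ, brentiPoly_eq_neg hu hv hj hjn hu_j hv_j]

theorem brenti_formula_one_general (n i : ℕ) (hi2 : i ≤ n - 1)
    (u v : Equiv.Perm ℕ) (hu : IsPermOn n u) (hv : IsPermOn n v)
    (hu' : MinReps n {i} u) (hv' : MinReps n {i} v) (huv : BruhatLE n u v)
    (R : Equiv.Perm ℕ → Equiv.Perm ℕ → Polynomial ℤ) (hR : IsRFamilyQ n {i} R) :
    R u v = (-1) ^ (invNum n v - invNum n u) *
      ∏ j ∈ ((Finset.Icc 1 n).filter (fun r => v r ∈ Finset.Icc 1 i)) \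
             ((Finset.Icc 1 n).filter (fun r => u r ∈ Finset.Icc 1 i)),
        (1 - X ^ ((posLT n i j u : ℤ) - posLT n i j v).toNat) := by
  have hi : i ≤ n := by omega
  rw [R_eq_brentiPoly hi hR hu hv ((minReps_singleton_iff hi hu).mp hu')
    ((minReps_singleton_iff hi hv).mp hv'), brentiPoly, prod_brentiFactor smallPositions_subset]
  obtain ⟨k, hk⟩ := Nat.exists_eq_add_of_le huv.invNum_le
  congr 1
  · rw [hk, Nat.add_sub_cancel_left, ← add_assoc, pow_add, ← two_mul, pow_mul, neg_one_sq,
      one_pow, one_mul]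
  · refine prod_congr rfl fun r _ => ?_
    rw [posLT_eq_countBelow, posLT_eq_countBelow]
    congr 2
    omega

/-- Brenti's formula for the parabolic `R`-polynomials with `J = S \ {s_i}`. -/
theorem brenti_formula_one (n i : ℕ) (hi1 : 1 ≤ i) (hi2 : i ≤ n - 1)
    (u v : Equiv.Perm ℕ) (hu : IsPermOn n u) (hv : IsPermOn n v)
    (hu' : MinReps n {i} u) (hv' : MinReps n {i} v) (huv : BruhatLE n u v)
    (R : Equiv.Perm ℕ → Equiv.Perm ℕ → Polynomial ℤ) (hR : IsRFamilyQ n {i} R) :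
    R u v = (-1) ^ (invNum n v - invNum n u) *
      ∏ j ∈ ((Finset.Icc 1 n).filter (fun r => v r ∈ Finset.Icc 1 i)) \
             ((Finset.Icc 1 n).filter (fun r => u r ∈ Finset.Icc 1 i)),
        (1 - X ^ ((posLT n i j u : ℤ) - posLT n i j v).toNat) :=
  brenti_formula_one_general n i hi2 u v hu hv hu' hv' huv R hR
end
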